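/- For every odd k and graph K: K is multiplicative if and only if Ω_k(K) is multiplicative. -/

import Mathlib

/-- A finite graph: symmetric edge relation, loops allowed. -/
structure FinGraph where
  V : Type
  Adj : V → V → Prop
  symm : ∀ {u v : V}, Adj u v → Adj v u
  [fin : Finite V]

attribute [instance] FinGraph.fin

/-- Existence of a graph homomorphism. -/
def FinGraph.Hom (G H : FinGraph) : Prop :=
  ∃ f : G.V → H.V, ∀ {u v : G.V}, G.Adj u v → H.Adj (f u) (f v)

/-- Homomorphic equivalence. -/
def FinGraph.HomEquiv (G H : FinGraph) : Prop := G.Hom H ∧ H.Hom G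

/-- Tensor (categorical) product of graphs. -/
def FinGraph.prod (G H : FinGraph) : FinGraph where
  V := G.V × H.V
  Adj := fun a b => G.Adj a.1 b.1 ∧ H.Adj a.2 b.2
  symm := fun h => ⟨G.symm h.1, H.symm h.2⟩

/-- A walk of length `n` from `u` to `v`. -/
def FinGraph.Walk (G : FinGraph) (n : ℕ) (u v : G.V) : Prop :=
  ∃ w : ℕ → G.V, w 0 = u ∧ w n = v ∧ ∀ i < n, G.Adj (w i) (w (i+1))

/-- The `k`-th power graph `Γ_k(G)`. -/
def FinGraph.pow (G : FinGraph) (k : ℕ) : FinGraph where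
  V := G.V
  Adj := fun u v => G.Walk k u v
  symm := by
    rintro u v ⟨w, h0, hk, hadj⟩
    refine ⟨fun i => w (k - i), by simpa using hk, by simpa using h0, fun i hi => ?_⟩
    have h1 : k - (i+1) + 1 = k - i := by omega
    have h2 := hadj (k - (i+1)) (by omega)
    rw [h1] at h2
    exact G.symm h2

/-- Raw vertices for the `k`-subdivision: original vertices plus internal path
vertices `(u,v,i)` with `uv` an edge and `0 < i < k`. -/
abbrev FinGraph.SubdivRaw (G : FinGraph) (k : ℕ) : Type :=
  G.V ⊕ {p : G.V × G.V × Fin (k+1) // G.Adj p.1 p.2.1 ∧ 0 < p.2.2.val ∧ p.2.2.val < k}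

/-- Identification `(u,v,i) ~ (v,u,k-i)` of internal vertices. -/
def FinGraph.subdivRel (G : FinGraph) (k : ℕ) : G.SubdivRaw k → G.SubdivRaw k → Prop :=
  fun a b => ∃ p q, a = Sum.inr p ∧ b = Sum.inr q ∧
    p.1.1 = q.1.2.1 ∧ p.1.2.1 = q.1.1 ∧ p.1.2.2.val + q.1.2.2.val = k

/-- Adjacency on raw subdivision vertices. -/
def FinGraph.subdivAdjRaw (G : FinGraph) (k : ℕ) : G.SubdivRaw k → G.SubdivRaw k → Prop := fun a b =>
  match a, b with
  | .inl u, .inl v => k = 1 ∧ G.Adj u v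
  | .inl u, .inr p => (p.1.1 = u ∧ p.1.2.2.val = 1) ∨ (p.1.2.1 = u ∧ p.1.2.2.val = k - 1)
  | .inr p, .inl u => (p.1.1 = u ∧ p.1.2.2.val = 1) ∨ (p.1.2.1 = u ∧ p.1.2.2.val = k - 1)
  | .inr p, .inr q =>
      (p.1.1 = q.1.1 ∧ p.1.2.1 = q.1.2.1 ∧
        (p.1.2.2.val + 1 = q.1.2.2.val ∨ q.1.2.2.val + 1 = p.1.2.2.val)) ∨
      (p.1.1 = q.1.2.1 ∧ p.1.2.1 = q.1.1 ∧
        (p.1.2.2.val + q.1.2.2.val = k + 1 ∨ p.1.2.2.val + q.1.2.2.val = k - 1))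

/-- The `k`-subdivision `Λ_k(G)`: every edge replaced by a path with `k` edges. -/
def FinGraph.subdiv (G : FinGraph) (k : ℕ) : FinGraph where
  V := Quot (G.subdivRel k)
  Adj := fun x y => ∃ a b, Quot.mk _ a = x ∧ Quot.mk _ b = y ∧
    (G.subdivAdjRaw k a b ∨ G.subdivAdjRaw k b a)
  symm := fun ⟨a, b, ha, hb, h⟩ => ⟨b, a, hb, ha, h.symm⟩

/-- `A` joined to `B`: every vertex of `A` adjacent to every vertex of `B`. -/
def FinGraph.Join (G : FinGraph) (A B : Set G.V) : Prop := ∀ a ∈ A, ∀ b ∈ B, G.Adj a b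

/-- Vertices of `Ω_{2ℓ+1}(G)`: tuples `(A_0, …, A_ℓ)` of vertex subsets with `A_0`
a singleton and `A_{i-1}` joined to `A_i`. -/
abbrev FinGraph.OmegaVert (G : FinGraph) (l : ℕ) : Type :=
  {A : Fin (l+1) → Set G.V //
    (∃ v, A 0 = {v}) ∧ ∀ i : Fin l, G.Join (A i.castSucc) (A i.succ)}

/-- The graph `Ω_{2ℓ+1}(G)`, right adjoint to the `(2ℓ+1)`-st power functor. -/
def FinGraph.omega (G : FinGraph) (l : ℕ) : FinGraph where
  V := G.OmegaVert l
  Adj := fun A B =>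
    (∀ i : Fin l, A.1 i.castSucc ⊆ B.1 i.succ ∧ B.1 i.castSucc ⊆ A.1 i.succ) ∧
    G.Join (A.1 (Fin.last l)) (B.1 (Fin.last l))
  symm := fun {A B} h =>
    ⟨fun i => ⟨(h.1 i).2, (h.1 i).1⟩, fun b hb a ha => G.symm (h.2 a ha b hb)⟩

/-- A multiplicative graph. -/
def FinGraph.Multiplicative (K : FinGraph) : Prop :=
  ∀ G H : FinGraph, (G.prod H).Hom K → G.Hom K ∨ H.Hom K

/-- A (thin) graph functor. -/
def IsGraphFunctor (F : FinGraph → FinGraph) : Prop :=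
  ∀ G H : FinGraph, G.Hom H → (F G).Hom (F H)

/-! `Ω_{2ℓ+1}` is right adjoint to the power functor `Γ_{2ℓ+1}`, and `Γ(G) × Γ(H) → Γ(G × H)`.
So a homomorphism `G × H → Ω(K)` transposes to `Γ(G) × Γ(H) → K`, and multiplicativity of `K`
gives `Γ(G) → K` or `Γ(H) → K`, i.e. `G → Ω(K)` or `H → Ω(K)`.

Conversely `Ω(G) × Ω(H) → Ω(G × H)`, and `Ω` reflects homomorphisms because `G → Γ(Ω(G))`:
for an edge `uv`, the `Ω`-vertices of iterated common neighbourhoods of `u` and of `v` are joined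
by a walk of length `2ℓ+1` whose vertices have their low levels on the zigzag `u, v, u, …`. -/

namespace FinGraph

theorem Hom.refl (G : FinGraph) : G.Hom G := ⟨id, id⟩

theorem Hom.trans {G H K : FinGraph} (hGH : G.Hom H) (hHK : H.Hom K) : G.Hom K := by
  obtain ⟨f, hf⟩ := hGH
  obtain ⟨g, hg⟩ := hHK
  exact ⟨g ∘ f, fun h => hg (hf h)⟩

section Walk

variable {G : FinGraph} {m n : ℕ} {u v w : G.V}

theorem walk_zero_iff : G.Walk 0 u v ↔ u = v := by
  constructor
  · rintro ⟨p, hp0, hpn, -⟩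
    rw [← hp0, hpn]
  · rintro rfl
    exact ⟨fun _ => u, rfl, rfl, fun _ h => absurd h (Nat.not_lt_zero _)⟩

theorem walk_one_iff : G.Walk 1 u v ↔ G.Adj u v := by
  constructor
  · rintro ⟨p, hp0, hp1, hadj⟩
    simpa [hp0, hp1] using hadj 0 Nat.one_pos
  · intro h
    refine ⟨fun i => if i = 0 then u else v, rfl, rfl, fun i hi => ?_⟩
    obtain rfl : i = 0 := by omega
    simpa using h

theorem Walk.symm (h : G.Walk n u v) : G.Walk n v u :=
  (G.pow n).symm h

theorem Walk.trans (huv : G.Walk m u v) (hvw : G.Walk n v w) : G.Walk (m + n) u w := by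
  obtain ⟨p, hp0, hpm, hp⟩ := huv
  obtain ⟨q, hq0, hqn, hq⟩ := hvw
  refine ⟨fun i => if i ≤ m then p i else q (i - m), by simp [hp0], ?_, ?_⟩
  · rcases Nat.eq_zero_or_pos n with rfl | hn
    · simp [hpm, ← hq0, hqn]
    · simp [show ¬ m + n ≤ m by omega, hqn]
  intro i hi
  rcases Nat.lt_or_ge i m with him | him
  · simpa [him.le, Nat.succ_le_of_lt him] using hp i him
  · have hstep := hq (i - m) (by omega)
    rw [show i - m + 1 = i + 1 - m by omega] at hstep
    rcases him.eq_or_lt with rfl | him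
    · simpa [hpm, ← hq0] using hstep
    · simpa [Nat.not_le.mpr him, show ¬ i + 1 ≤ m by omega] using hstep

theorem Walk.cons (huv : G.Adj u v) (hvw : G.Walk n v w) : G.Walk (n + 1) u w :=
  Nat.add_comm 1 n ▸ (walk_one_iff.mpr huv).trans hvw

theorem Walk.exists_mid (h : G.Walk (m + n) u w) : ∃ v, G.Walk m u v ∧ G.Walk n v w := by
  obtain ⟨p, hp0, hpn, hp⟩ := h
  refine ⟨p m, ⟨p, hp0, rfl, fun i hi => hp i (by omega)⟩, ⟨fun i => p (m + i), rfl, hpn, ?_⟩⟩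
  exact fun i hi => hp (m + i) (by omega)

theorem Walk.map {H : FinGraph} {f : G.V → H.V} (hf : ∀ {a b : G.V}, G.Adj a b → H.Adj (f a) (f b))
    (h : G.Walk n u v) : H.Walk n (f u) (f v) := by
  obtain ⟨p, hp0, hpn, hp⟩ := h
  exact ⟨f ∘ p, by simp [hp0], by simp [hpn], fun i hi => hf (hp i hi)⟩

theorem Walk.add_two (h : G.Walk n u v) (hn : 0 < n) : G.Walk (n + 2) u v := by
  obtain ⟨p, hp0, hpn, hp⟩ := h
  have hu : G.Adj u (p 1) := hp0 ▸ hp 0 hn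
  exact (Walk.cons hu (Walk.cons (G.symm hu) ⟨p, hp0, hpn, hp⟩))

theorem Walk.add_two_mul (h : G.Walk n u v) (hn : 0 < n) (c : ℕ) : G.Walk (n + 2 * c) u v := by
  induction c with
  | zero => exact h
  | succ c ih => exact ih.add_two (by omega)

end Walk

section Unit

variable {G : FinGraph}

def commonNbrs (G : FinGraph) (S : Set G.V) : Set G.V := {w | ∀ x ∈ S, G.Adj x w}

theorem join_singleton {a b : G.V} (h : G.Adj a b) : G.Join {a} {b} := by
  rintro x rfl y rfl
  exact h

theorem Join.symm {A B : Set G.V} (h : G.Join A B) : G.Join B A :=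
  fun b hb a ha => G.symm (h a ha b hb)

theorem join_commonNbrs (S : Set G.V) : G.Join S (G.commonNbrs S) :=
  fun _ ha _ hb => hb _ ha

theorem subset_commonNbrs_commonNbrs (S : Set G.V) : S ⊆ G.commonNbrs (G.commonNbrs S) :=
  fun _ hx _ hy => G.symm (hy _ hx)

theorem join_commonNbrs_iterate (S : Set G.V) (j : ℕ) :
    G.Join (G.commonNbrs^[j] S) (G.commonNbrs^[j + 1] S) := by
  rw [Function.iterate_succ_apply']
  exact join_commonNbrs _

theorem commonNbrs_iterate_subset (S : Set G.V) (j : ℕ) :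
    G.commonNbrs^[j] S ⊆ G.commonNbrs^[j + 2] S := by
  rw [Function.iterate_succ_apply', Function.iterate_succ_apply']
  exact subset_commonNbrs_commonNbrs _

def unitVert (G : FinGraph) (l : ℕ) (v : G.V) : (G.omega l).V :=
  ⟨fun i => G.commonNbrs^[i] {v}, ⟨v, rfl⟩, fun i => join_commonNbrs_iterate _ i⟩

/-- Thanks to truncated subtraction this is `{p (t - i)}` for `i ≤ t` and
`commonNbrs^[i - t] {p 0}` for `i ≥ t`. -/
def zigzagLevel (G : FinGraph) (p : ℕ → G.V) (t i : ℕ) : Set G.V :=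
  G.commonNbrs^[i - t] {p (t - i)}

variable {p : ℕ → G.V}

theorem zigzagLevel_of_le {t i : ℕ} (h : i ≤ t) : G.zigzagLevel p t i = {p (t - i)} := by
  simp [zigzagLevel, Nat.sub_eq_zero_of_le h]

theorem zigzagLevel_of_ge {t i : ℕ} (h : t ≤ i) :
    G.zigzagLevel p t i = G.commonNbrs^[i - t] {p 0} := by
  simp [zigzagLevel, Nat.sub_eq_zero_of_le h]

theorem zigzagLevel_succ_succ (t i : ℕ) :
    G.zigzagLevel p (t + 1) (i + 1) = G.zigzagLevel p t i := by
  simp [zigzagLevel, Nat.add_sub_add_right]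

theorem zigzagLevel_join (hp : ∀ m, G.Adj (p m) (p (m + 1))) (t i : ℕ) :
    G.Join (G.zigzagLevel p t i) (G.zigzagLevel p t (i + 1)) := by
  rcases Nat.lt_or_ge i t with hi | hi
  · rw [zigzagLevel_of_le hi.le, zigzagLevel_of_le hi]
    refine join_singleton (G.symm ?_)
    simpa [show t - i = t - (i + 1) + 1 by omega] using hp (t - (i + 1))
  · rw [zigzagLevel_of_ge hi, zigzagLevel_of_ge (by omega), show i + 1 - t = i - t + 1 by omega]
    exact join_commonNbrs_iterate _ _

theorem zigzagLevel_subset (hp : ∀ m, G.Adj (p m) (p (m + 1))) (hp2 : ∀ m, p (m + 2) = p m)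
    (t i : ℕ) : G.zigzagLevel p (t + 1) i ⊆ G.zigzagLevel p t (i + 1) := by
  rcases lt_trichotomy i t with hi | rfl | hi
  · rw [zigzagLevel_of_le (by omega), zigzagLevel_of_le hi,
      show t + 1 - i = t - (i + 1) + 2 by omega, hp2]
  · rw [zigzagLevel_of_le (Nat.le_succ i), zigzagLevel_of_ge (Nat.le_succ i)]
    simpa [commonNbrs] using hp 0
  · rw [zigzagLevel_of_ge hi, zigzagLevel_of_ge (by omega : t ≤ i + 1),
      show i + 1 - t = i - (t + 1) + 2 by omega]
    exact commonNbrs_iterate_subset _ _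

def zigzagVert (G : FinGraph) (l : ℕ) (p : ℕ → G.V) (hp : ∀ m, G.Adj (p m) (p (m + 1)))
    (t : ℕ) : (G.omega l).V :=
  ⟨fun i => G.zigzagLevel p t i, ⟨p t, zigzagLevel_of_le (Nat.zero_le t)⟩,
    fun i => zigzagLevel_join hp t i⟩

variable {l : ℕ} {hp : ∀ m, G.Adj (p m) (p (m + 1))}

theorem zigzagVert_adj_succ (hp2 : ∀ m, p (m + 2) = p m) {t : ℕ} (ht : t < l) :
    (G.omega l).Adj (G.zigzagVert l p hp t) (G.zigzagVert l p hp (t + 1)) := by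
  refine ⟨fun i => ⟨?_, ?_⟩, ?_⟩
  · show G.zigzagLevel p t i.castSucc ⊆ G.zigzagLevel p (t + 1) i.succ
    rw [Fin.val_castSucc, Fin.val_succ, zigzagLevel_succ_succ]
  · show G.zigzagLevel p (t + 1) i.castSucc ⊆ G.zigzagLevel p t i.succ
    rw [Fin.val_castSucc, Fin.val_succ]
    exact zigzagLevel_subset hp hp2 t i
  · show G.Join (G.zigzagLevel p t l) (G.zigzagLevel p (t + 1) l)
    rw [zigzagLevel_of_ge ht.le, zigzagLevel_of_ge ht, show l - t = l - (t + 1) + 1 by omega]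
    exact (join_commonNbrs_iterate _ _).symm

theorem zigzagVert_adj_shift (hp2 : ∀ m, p (m + 2) = p m) :
    (G.omega l).Adj (G.zigzagVert l p hp l)
      (G.zigzagVert l (fun m => p (m + 1)) (fun m => hp (m + 1)) l) := by
  refine ⟨fun i => ⟨?_, ?_⟩, ?_⟩
  · show G.zigzagLevel p l i.castSucc ⊆ G.zigzagLevel (fun m => p (m + 1)) l i.succ
    rw [Fin.val_castSucc, Fin.val_succ, zigzagLevel_of_le (by omega), zigzagLevel_of_le (by omega),
      show l - (i + 1) + 1 = l - i by omega]
  · show G.zigzagLevel (fun m => p (m + 1)) l i.castSucc ⊆ G.zigzagLevel p l i.succ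
    rw [Fin.val_castSucc, Fin.val_succ, zigzagLevel_of_le (by omega), zigzagLevel_of_le (by omega),
      show l - i + 1 = l - (i + 1) + 2 by omega, hp2]
  · show G.Join (G.zigzagLevel p l l) (G.zigzagLevel (fun m => p (m + 1)) l l)
    rw [zigzagLevel_of_le le_rfl, zigzagLevel_of_le le_rfl, Nat.sub_self]
    exact join_singleton (hp 0)

theorem zigzagVert_zero : G.zigzagVert l p hp 0 = G.unitVert l (p 0) :=
  Subtype.ext <| funext fun i => zigzagLevel_of_ge (Nat.zero_le i)

theorem walk_unitVert_zigzagVert (hp2 : ∀ m, p (m + 2) = p m) :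
    (G.omega l).Walk l (G.unitVert l (p 0)) (G.zigzagVert l p hp l) :=
  ⟨G.zigzagVert l p hp, zigzagVert_zero, rfl, fun _ ht => zigzagVert_adj_succ hp2 ht⟩

end Unit

theorem hom_pow_omega (G : FinGraph) (l : ℕ) : G.Hom ((G.omega l).pow (2 * l + 1)) := by
  refine ⟨G.unitVert l, fun {u v} huv => ?_⟩
  let p : ℕ → G.V := fun m => if Even m then u else v
  have hp : ∀ m, G.Adj (p m) (p (m + 1)) := by
    intro m
    rcases Nat.even_or_odd m with hm | hm
    · simpa [p, hm, Nat.even_add_one] using huv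
    · simpa [p, Nat.not_even_iff_odd.mpr hm, Nat.even_add_one] using G.symm huv
  have hp2 : ∀ m, p (m + 2) = p m := by simp [p, Nat.even_add]
  have hup : (G.omega l).Walk l (G.unitVert l u) (G.zigzagVert l p hp l) :=
    walk_unitVert_zigzagVert hp2
  have hvp : (G.omega l).Walk l (G.unitVert l v)
      (G.zigzagVert l (fun m => p (m + 1)) (fun m => hp (m + 1)) l) :=
    walk_unitVert_zigzagVert (p := fun m => p (m + 1)) fun m => hp2 (m + 1)
  have hwalk := hup.trans ((walk_one_iff.mpr (zigzagVert_adj_shift hp2)).trans hvp.symm)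
  rwa [show l + (1 + l) = 2 * l + 1 by omega] at hwalk

theorem hom_omega_of_pow_hom {G K : FinGraph} {l : ℕ} (h : (G.pow (2 * l + 1)).Hom K) :
    G.Hom (K.omega l) := by
  obtain ⟨f, hf⟩ : ∃ f : G.V → K.V, ∀ {y z}, G.Walk (2 * l + 1) y z → K.Adj (f y) (f z) := h
  have hf' : ∀ {i : ℕ} {y z : G.V}, i < l + 1 → G.Walk (i + (i + 1)) y z → K.Adj (f y) (f z) := by
    intro i y z hi hw
    refine hf ?_
    simpa [show i + (i + 1) + 2 * (l - i) = 2 * l + 1 by omega] using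
      hw.add_two_mul (by omega) (l - i)
  refine ⟨fun v => ⟨fun i => f '' {y | G.Walk i v y}, ⟨f v, ?_⟩, ?_⟩, ?_⟩
  · show f '' {y | G.Walk 0 v y} = {f v}
    rw [show {y | G.Walk 0 v y} = {v} from Set.ext fun _ => walk_zero_iff.trans eq_comm,
      Set.image_singleton]
  · rintro i _ ⟨y, hy, rfl⟩ _ ⟨z, hz, rfl⟩
    exact hf' i.castSucc.isLt (hy.symm.trans hz)
  · intro u v huv
    refine ⟨fun i => ⟨?_, ?_⟩, ?_⟩
    · rintro _ ⟨y, hy, rfl⟩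
      exact ⟨y, Walk.cons (G.symm huv) hy, rfl⟩
    · rintro _ ⟨y, hy, rfl⟩
      exact ⟨y, Walk.cons huv hy, rfl⟩
    · rintro _ ⟨y, hy, rfl⟩ _ ⟨z, hz, rfl⟩
      exact hf' (Fin.last l).isLt (hy.symm.trans (Walk.cons huv hz))

theorem omega_walk_level_subset {K : FinGraph} {l n : ℕ} {A C : (K.omega l).V}
    (h : (K.omega l).Walk n A C) (hn : n ≤ l) : A.1 0 ⊆ C.1 ⟨n, by omega⟩ := by
  induction n generalizing C with
  | zero => rw [walk_zero_iff.mp h]; rfl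
  | succ n ih =>
    obtain ⟨B, hAB, hBC⟩ := h.exists_mid
    exact (ih hAB (by omega)).trans ((walk_one_iff.mp hBC).1 ⟨n, by omega⟩).1

theorem adj_of_omega_walk {K : FinGraph} {l : ℕ} {A B : (K.omega l).V}
    (h : (K.omega l).Walk (l + (1 + l)) A B) {a b : K.V} (ha : a ∈ A.1 0) (hb : b ∈ B.1 0) :
    K.Adj a b := by
  obtain ⟨C, hAC, hCB⟩ := h.exists_mid
  obtain ⟨D, hCD, hDB⟩ := hCB.exists_mid
  exact (walk_one_iff.mp hCD).2 a (omega_walk_level_subset hAC le_rfl ha) b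
    (omega_walk_level_subset hDB.symm le_rfl hb)

theorem pow_hom_of_hom_omega {G K : FinGraph} {l : ℕ} (h : G.Hom (K.omega l)) :
    (G.pow (2 * l + 1)).Hom K := by
  obtain ⟨f, hf⟩ := h
  have center_mem : ∀ v, (f v).2.1.choose ∈ (f v).1 0 := fun v =>
    (Set.eq_singleton_iff_unique_mem.mp (f v).2.1.choose_spec).1
  refine ⟨fun v => (f v).2.1.choose, fun {u v} huv => ?_⟩
  have hwalk : G.Walk (l + (1 + l)) u v := by rwa [show l + (1 + l) = 2 * l + 1 by omega]
  exact adj_of_omega_walk (hwalk.map hf) (center_mem u) (center_mem v)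

theorem pow_hom_iff_hom_omega {G K : FinGraph} {l : ℕ} :
    (G.pow (2 * l + 1)).Hom K ↔ G.Hom (K.omega l) :=
  ⟨hom_omega_of_pow_hom, pow_hom_of_hom_omega⟩

theorem omega_isGraphFunctor (l : ℕ) : IsGraphFunctor (omega · l) := fun G _ h =>
  hom_omega_of_pow_hom ((pow_hom_of_hom_omega (Hom.refl (G.omega l))).trans h)

theorem hom_of_omega_hom {G K : FinGraph} {l : ℕ} (h : (G.omega l).Hom (K.omega l)) : G.Hom K :=
  (G.hom_pow_omega l).trans (pow_hom_of_hom_omega h)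

theorem prod_pow_hom_pow_prod (G H : FinGraph) (k : ℕ) :
    ((G.pow k).prod (H.pow k)).Hom ((G.prod H).pow k) := by
  refine ⟨id, fun {x y} ⟨⟨p, hp0, hpk, hp⟩, ⟨q, hq0, hqk, hq⟩⟩ => ?_⟩
  exact ⟨fun i => (p i, q i), Prod.ext hp0 hq0, Prod.ext hpk hqk, fun i hi => ⟨hp i hi, hq i hi⟩⟩

theorem prod_omega_hom_omega_prod (G H : FinGraph) (l : ℕ) :
    ((G.omega l).prod (H.omega l)).Hom ((G.prod H).omega l) := by
  refine ⟨fun A : (G.omega l).V × (H.omega l).V => ⟨fun i => A.1.1 i ×ˢ A.2.1 i, ?_, ?_⟩, ?_⟩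
  · obtain ⟨a, ha⟩ := A.1.2.1
    obtain ⟨b, hb⟩ := A.2.2.1
    exact ⟨(a, b), show A.1.1 0 ×ˢ A.2.1 0 = _ by rw [ha, hb, Set.singleton_prod_singleton]; rfl⟩
  · exact fun i x hx y hy => ⟨A.1.2.2 i _ hx.1 _ hy.1, A.2.2.2 i _ hx.2 _ hy.2⟩
  · rintro A B ⟨hA, hB⟩
    refine ⟨fun i => ⟨Set.prod_mono (hA.1 i).1 (hB.1 i).1, Set.prod_mono (hA.1 i).2 (hB.1 i).2⟩, ?_⟩
    exact fun x hx y hy => ⟨hA.2 _ hx.1 _ hy.1, hB.2 _ hx.2 _ hy.2⟩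

theorem Multiplicative.map_rightAdjoint {F R : FinGraph → FinGraph}
    (adj : ∀ G K, (F G).Hom K ↔ G.Hom (R K))
    (hF : ∀ G H, ((F G).prod (F H)).Hom (F (G.prod H))) {K : FinGraph}
    (hK : K.Multiplicative) : (R K).Multiplicative := fun G H h =>
  (hK _ _ ((hF G H).trans ((adj _ _).mpr h))).imp (adj _ _).mp (adj _ _).mp

theorem Multiplicative.of_map_reflecting {R : FinGraph → FinGraph} (hR : IsGraphFunctor R)
    (hprod : ∀ G H, ((R G).prod (R H)).Hom (R (G.prod H))) {K : FinGraph}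
    (hrefl : ∀ G, (R G).Hom (R K) → G.Hom K) (h : (R K).Multiplicative) :
    K.Multiplicative := fun G H hGH =>
  (h _ _ ((hprod G H).trans (hR _ _ hGH))).imp (hrefl G) (hrefl H)

end FinGraph

/-- `K` is multiplicative iff `Ω_{2ℓ+1}(K)` is multiplicative. -/
theorem multiplicative_iff_omega_multiplicative (l : ℕ) (K : FinGraph) :
    K.Multiplicative ↔ (K.omega l).Multiplicative :=
  ⟨fun hK => hK.map_rightAdjoint (fun _ _ => FinGraph.pow_hom_iff_hom_omega)
      (fun G H => G.prod_pow_hom_pow_prod H _),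
    fun h => h.of_map_reflecting (FinGraph.omega_isGraphFunctor l)
      (fun G H => G.prod_omega_hom_omega_prod H l) (fun _ => FinGraph.hom_of_omega_hom)⟩
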